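/- For the 2D bicrossproduct model metric g = dr⊗dr + b v⊗v with v = r dt − t dr (b ≠ 0 a real constant, r > 0), the Levi-Civita connection satisfies ∇̂ v = −(2/r) v ⊗ dr and ∇̂ dr = (2b/r) v ⊗ v. -/

import Mathlib

/-!
The metric components are polynomials in `(t, r)`, so their partial derivatives, and with the
explicit inverse metric the Christoffel symbols, are computed entry by entry. Each component of
`∇̂ v` and `∇̂ dr` is then an identity between rational functions in `t` and `r`.
-/

/-- Partial derivative of `f : (Fin n → ℝ) → ℝ` in the `i`-th coordinate direction. -/
noncomputable def pd {n : ℕ} (i : Fin n) (f : (Fin n → ℝ) → ℝ) (x : Fin n → ℝ) : ℝ :=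
  fderiv ℝ f x (Pi.single i 1)

/-- The 2D bicrossproduct-model metric `g = dr⊗dr + b v⊗v` with `v = r dt − t dr`, in
coordinates `x = (t, r)`: `g_{00} = br²`, `g_{01} = g_{10} = −brt`, `g_{11} = 1 + bt²`. -/
noncomputable def gBic (b : ℝ) (μ ν : Fin 2) (x : Fin 2 → ℝ) : ℝ :=
  if μ = 0 ∧ ν = 0 then b * (x 1)^2
  else if (μ = 0 ∧ ν = 1) ∨ (μ = 1 ∧ ν = 0) then -(b * (x 1) * (x 0))
  else 1 + b * (x 0)^2

/-- The inverse bicrossproduct metric: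
`g^{00} = (1+bt²)/(br²)`, `g^{01} = t/r`, `g^{11} = 1`. -/
noncomputable def ginvBic (b : ℝ) (μ ν : Fin 2) (x : Fin 2 → ℝ) : ℝ :=
  if μ = 0 ∧ ν = 0 then (1 + b * (x 0)^2) / (b * (x 1)^2)
  else if (μ = 0 ∧ ν = 1) ∨ (μ = 1 ∧ ν = 0) then x 0 / x 1
  else 1

/-- Levi-Civita Christoffel symbols of the bicrossproduct metric. -/
noncomputable def ΓBic (b : ℝ) (μ α β : Fin 2) (x : Fin 2 → ℝ) : ℝ :=
  (1/2) * ∑ ν, ginvBic b μ ν x *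
    (pd β (gBic b ν α) x + pd α (gBic b ν β) x - pd ν (gBic b α β) x)

/-- Components of the 1-form `v = r dt − t dr`. -/
noncomputable def vComp (α : Fin 2) (x : Fin 2 → ℝ) : ℝ :=
  if α = 0 then x 1 else -(x 0)

theorem pd_eq_of_hasFDerivAt {n : ℕ} {f : (Fin n → ℝ) → ℝ} {f' : (Fin n → ℝ) →L[ℝ] ℝ}
    {x : Fin n → ℝ} (i : Fin n) (h : HasFDerivAt f f' x) :
    pd i f x = f' (Pi.single i 1) := by
  rw [pd, h.fderiv]

theorem pd_const {n : ℕ} (i : Fin n) (c : ℝ) (x : Fin n → ℝ) : pd i (fun _ => c) x = 0 := by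
  simp [pd]

theorem hasFDerivAt_coord {n : ℕ} (j : Fin n) (x : Fin n → ℝ) :
    HasFDerivAt (fun y : Fin n → ℝ => y j) (ContinuousLinearMap.proj (R := ℝ) j) x :=
  hasFDerivAt_apply j x

/-- `(∇̂_β ω)_α` for the 1-form `ω = ω_α dx^α`. -/
noncomputable def covDerivBic (b : ℝ) (ω : Fin 2 → (Fin 2 → ℝ) → ℝ) (β α : Fin 2)
    (x : Fin 2 → ℝ) : ℝ :=
  pd β (ω α) x - ∑ γ, ΓBic b γ β α x * ω γ x

def drComp (α : Fin 2) : (Fin 2 → ℝ) → ℝ := fun _ => if α = 1 then 1 else 0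

theorem pd_drComp (α β : Fin 2) (x : Fin 2 → ℝ) : pd β (drComp α) x = 0 :=
  pd_const β _ x

section Bicrossproduct

variable {b : ℝ} {x : Fin 2 → ℝ}

theorem pd_gBic_zero_zero (i : Fin 2) : pd i (gBic b 0 0) x = ![0, 2 * b * x 1] i := by
  have h := ((hasFDerivAt_coord 1 x).pow 2).const_mul b
  rw [show gBic b 0 0 = fun y => b * y 1 ^ 2 from rfl, pd_eq_of_hasFDerivAt i h]
  fin_cases i <;> simp; ring

theorem pd_gBic_zero_one (i : Fin 2) : pd i (gBic b 0 1) x = ![-(b * x 1), -(b * x 0)] i := by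
  have h := (((hasFDerivAt_coord 1 x).const_mul b).fun_mul (hasFDerivAt_coord 0 x)).fun_neg
  rw [show gBic b 0 1 = fun y => -(b * y 1 * y 0) from rfl, pd_eq_of_hasFDerivAt i h]
  fin_cases i <;> simp [mul_comm]

theorem pd_gBic_one_one (i : Fin 2) : pd i (gBic b 1 1) x = ![2 * b * x 0, 0] i := by
  have h := (((hasFDerivAt_coord 0 x).pow 2).const_mul b).const_add 1
  rw [show gBic b 1 1 = fun y => 1 + b * y 0 ^ 2 from rfl, pd_eq_of_hasFDerivAt i h]
  fin_cases i <;> simp; ring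

theorem pd_vComp_zero (i : Fin 2) : pd i (vComp 0) x = ![0, 1] i := by
  rw [show vComp 0 = fun y => y 1 from rfl, pd_eq_of_hasFDerivAt i (hasFDerivAt_coord 1 x)]
  fin_cases i <;> simp

theorem pd_vComp_one (i : Fin 2) : pd i (vComp 1) x = ![-1, 0] i := by
  rw [show vComp 1 = fun y => -y 0 from rfl, pd_eq_of_hasFDerivAt i (hasFDerivAt_coord 0 x).fun_neg]
  fin_cases i <;> simp

theorem gBic_comm (b : ℝ) (α β : Fin 2) : gBic b α β = gBic b β α := by
  fin_cases α <;> fin_cases β <;> rfl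

theorem ΓBic_comm (μ α β : Fin 2) : ΓBic b μ α β x = ΓBic b μ β α x := by
  simp only [ΓBic, gBic_comm b α β, add_comm]

theorem ginvBic_zero_zero : ginvBic b 0 0 x = (1 + b * x 0 ^ 2) / (b * x 1 ^ 2) := rfl
theorem ginvBic_zero_one : ginvBic b 0 1 x = x 0 / x 1 := rfl
theorem ginvBic_one_zero : ginvBic b 1 0 x = x 0 / x 1 := rfl
theorem ginvBic_one_one : ginvBic b 1 1 x = 1 := rfl

variable (hb : b ≠ 0) (hr : x 1 ≠ 0)
include hr

theorem ΓBic_zero_zero_zero : ΓBic b 0 0 0 x = -2 * b * x 0 := by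
  simp only [ΓBic, Fin.sum_univ_two, ginvBic_zero_zero, ginvBic_zero_one, gBic_comm b 1 0,
    pd_gBic_zero_zero, pd_gBic_zero_one, Matrix.cons_val_zero, Matrix.cons_val_one,
    Matrix.cons_val_fin_one, mul_zero, sub_zero, add_zero, zero_add]
  field_simp
  ring

include hb in
theorem ΓBic_zero_zero_one : ΓBic b 0 0 1 x = (1 + 2 * b * x 0 ^ 2) / x 1 := by
  simp only [ΓBic, Fin.sum_univ_two, ginvBic_zero_zero, ginvBic_zero_one, gBic_comm b 1 0,
    pd_gBic_zero_zero, pd_gBic_zero_one, pd_gBic_one_one, Matrix.cons_val_zero,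
    Matrix.cons_val_one, Matrix.cons_val_fin_one]
  field_simp
  ring

include hb in
theorem ΓBic_zero_one_one : ΓBic b 0 1 1 x = -2 * x 0 * (1 + b * x 0 ^ 2) / x 1 ^ 2 := by
  simp only [ΓBic, Fin.sum_univ_two, ginvBic_zero_zero, ginvBic_zero_one, pd_gBic_zero_one,
    pd_gBic_one_one, Matrix.cons_val_zero, Matrix.cons_val_one, Matrix.cons_val_fin_one,
    mul_zero, sub_zero, add_zero]
  field_simp
  ring

theorem ΓBic_one_zero_zero : ΓBic b 1 0 0 x = -2 * b * x 1 := by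
  simp only [ΓBic, Fin.sum_univ_two, ginvBic_one_zero, ginvBic_one_one, gBic_comm b 1 0,
    pd_gBic_zero_zero, pd_gBic_zero_one, Matrix.cons_val_zero, Matrix.cons_val_one,
    Matrix.cons_val_fin_one, mul_zero, sub_zero, add_zero, zero_add]
  field_simp
  ring

theorem ΓBic_one_zero_one : ΓBic b 1 0 1 x = 2 * b * x 0 := by
  simp only [ΓBic, Fin.sum_univ_two, ginvBic_one_zero, ginvBic_one_one, gBic_comm b 1 0,
    pd_gBic_zero_zero, pd_gBic_zero_one, pd_gBic_one_one, Matrix.cons_val_zero,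
    Matrix.cons_val_one, Matrix.cons_val_fin_one]
  field_simp
  ring

theorem ΓBic_one_one_one : ΓBic b 1 1 1 x = -2 * b * x 0 ^ 2 / x 1 := by
  simp only [ΓBic, Fin.sum_univ_two, ginvBic_one_zero, ginvBic_one_one, pd_gBic_zero_one,
    pd_gBic_one_one, Matrix.cons_val_zero, Matrix.cons_val_one, Matrix.cons_val_fin_one,
    mul_zero, sub_zero, add_zero]
  field_simp
  ring

include hb in
theorem covDerivBic_vComp (α β : Fin 2) :
    covDerivBic b vComp β α x = -(2 / x 1) * vComp β x * drComp α x := by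
  fin_cases α <;> fin_cases β <;>
  · simp only [covDerivBic, Fin.sum_univ_two, ΓBic_comm _ 1 0, ΓBic_zero_zero_zero hr,
      ΓBic_zero_zero_one hb hr, ΓBic_zero_one_one hb hr, ΓBic_one_zero_zero hr,
      ΓBic_one_zero_one hr, ΓBic_one_one_one hr, pd_vComp_zero, pd_vComp_one, vComp, drComp,
      Matrix.cons_val_zero, Matrix.cons_val_one, Matrix.cons_val_fin_one, Fin.zero_eta, Fin.mk_one,
      Fin.isValue, ↓reduceIte, one_ne_zero, zero_ne_one]
    field_simp
    ring

theorem covDerivBic_drComp (α β : Fin 2) :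
    covDerivBic b drComp β α x = 2 * b / x 1 * vComp β x * vComp α x := by
  fin_cases α <;> fin_cases β <;>
  · simp only [covDerivBic, Fin.sum_univ_two, ΓBic_comm _ 1 0, ΓBic_one_zero_zero hr,
      ΓBic_one_zero_one hr, ΓBic_one_one_one hr, pd_drComp, vComp, drComp, Fin.zero_eta,
      Fin.mk_one, Fin.isValue, ↓reduceIte, one_ne_zero, zero_ne_one, mul_zero, mul_one, zero_add]
    field_simp
    ring

end Bicrossproduct

/-- For the 2D bicrossproduct model the Levi-Civita connection satisfies
`∇̂ v = −(2/r) v ⊗ dr` and `∇̂ dr = (2b/r) v ⊗ v`, stated componentwise as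
`(∇̂_β ω)_α = ∂_β ω_α − Γ̂^γ_{βα} ω_γ`. -/
theorem stmt14 (b : ℝ) (hb : b ≠ 0) :
    ∀ x : Fin 2 → ℝ, 0 < x 1 → ∀ α β : Fin 2,
      (pd β (vComp α) x - (∑ γ, ΓBic b γ β α x * vComp γ x)
        = -(2 / x 1) * vComp β x * (if α = 1 then (1:ℝ) else 0)) ∧
      (pd β (fun _ => if α = (1 : Fin 2) then (1:ℝ) else 0) x
          - (∑ γ, ΓBic b γ β α x * (if γ = 1 then (1:ℝ) else 0))
        = (2 * b / x 1) * vComp β x * vComp α x) := by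
  intro x hr α β
  exact ⟨covDerivBic_vComp hb hr.ne' α β, covDerivBic_drComp hr.ne' α β⟩
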